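/- Let n ≥ 2, let G = (Z/nZ) × (Z/nZ), and let S be a sequence over G of length 2n-2+k for some k ∈ [1, n-1] with 0 ∉ Σ_{≤2n-1-k}(S), and suppose S has the structure given by the Conjecture (for the appropriate k): either S is a minimal zero-sum type sequence e1^{[n-1]}·∏(x_i e1+e2) for k=1, or S = e1^{[n-1]}·e2^{[n-1]}·(e1+e2)^{[k]} for k ∈ [2,n-2], or S = e1^{[n-1]}·e2^{[n-1]}·(x e1+e2)^{[n-1]} with gcd(x,n)=1 for k = n-1. If x ∈ supp(S), y ∈ G, and S' = S·x^{[-1]}·y also has 0 ∉ Σ_{≤2n-1-k}(S') and S' has the corresponding conjectured structure, then x = y. -/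
import Mathlib

/-- `(e1, e2)` is a basis for `(ZMod N)²`: the map `(a,b) ↦ a•e1 + b•e2` is bijective. -/
def IsBasis {N : ℕ} (e1 e2 : ZMod N × ZMod N) : Prop :=
  Function.Bijective (fun p : ZMod N × ZMod N => p.1 • e1 + p.2 • e2)

/-- The structure in part 2 (k = 1) of the Conjecture:
`S = e1^{[N-1]} · ∏ᵢ (xᵢ e1 + e2)` with `∑ xᵢ ≡ 1 (mod N)`. -/
def Form1 (N : ℕ) (e1 e2 : ZMod N × ZMod N) (S : Multiset (ZMod N × ZMod N)) : Prop :=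
  ∃ x : Fin N → ZMod N, (∑ i, x i) = 1 ∧
    S = Multiset.replicate (N - 1) e1 +
        (Finset.univ : Finset (Fin N)).val.map (fun i => x i • e1 + e2)

/-- `S` has the structure described by the Conjecture for the parameter `k` in
`(ZMod N)²`. -/
def HasConjStructure (N k : ℕ) (S : Multiset (ZMod N × ZMod N)) : Prop :=
  ∃ e1 e2 : ZMod N × ZMod N, IsBasis e1 e2 ∧
    (k = 0 → Form1 N e1 e2 (-S.sum ::ₘ S)) ∧
    (k = 1 → Form1 N e1 e2 S) ∧
    (2 ≤ k ∧ k ≤ N - 2 →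
      S = Multiset.replicate (N - 1) e1 + Multiset.replicate (N - 1) e2 +
            Multiset.replicate k (e1 + e2)) ∧
    (k = N - 1 → ∃ x : ℕ, 1 ≤ x ∧ x ≤ N - 1 ∧ Nat.gcd x N = 1 ∧
      S = Multiset.replicate (N - 1) e1 + Multiset.replicate (N - 1) e2 +
            Multiset.replicate (N - 1) ((x : ZMod N) • e1 + e2))

/-- The Conjecture holds for `k` in `(ZMod N)²`: every sequence of length
`2N - 2 + k` with no nonempty zero-sum subsequence of length at most `2N - 1 - k`
has the conjectured structure. -/
def ConjHolds (N k : ℕ) : Prop :=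
  ∀ S : Multiset (ZMod N × ZMod N), Multiset.card S = 2 * N - 2 + k →
    (∀ T ≤ S, T ≠ 0 → Multiset.card T ≤ 2 * N - 1 - k → T.sum ≠ 0) →
    HasConjStructure N k S

/- ### Auxiliary lemmas -/

theorem count_three' {α : Type*} [DecidableEq α] {a b c : α} (hab : a ≠ b) (hac : a ≠ c)
    (hbc : b ≠ c) (p q r : ℕ) (z : α) :
    Multiset.count z (Multiset.replicate p a + Multiset.replicate q b + Multiset.replicate r c)
    = if z = a then p else if z = b then q else if z = c then r else 0 := by
  rcases eq_or_ne z a with rfl | h1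
  · simp [Multiset.count_replicate, hab, hac, hab.symm, hac.symm]
  rcases eq_or_ne z b with rfl | h2
  · simp [Multiset.count_replicate, h1, hbc, h1.symm, hbc.symm]
  rcases eq_or_ne z c with rfl | h3
  · simp [Multiset.count_replicate, h1, h2, h1.symm, h2.symm]
  · simp [Multiset.count_replicate, h1, h2, h3, h1.symm, h2.symm, h3.symm]

theorem basis_coeff' {N : ℕ} {e1 e2 : ZMod N × ZMod N} (hb : IsBasis e1 e2)
    {a b c d : ZMod N} (h : a • e1 + b • e2 = c • e1 + d • e2) : a = c ∧ b = d := by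
  have h2 : ((a, b) : ZMod N × ZMod N) = (c, d) := hb.1 h
  exact ⟨congrArg Prod.fst h2, congrArg Prod.snd h2⟩

theorem nsmul_self_zero' {n : ℕ} (g : ZMod n × ZMod n) : n • g = 0 := by
  have h : ∀ a : ZMod n, n • a = 0 := fun a => by
    rw [nsmul_eq_mul, ZMod.natCast_self, zero_mul]
  ext <;> simp [h]

theorem form1_sum' {n : ℕ} (hn : 1 ≤ n) {e1 e2 : ZMod n × ZMod n}
    {S : Multiset (ZMod n × ZMod n)} (h : Form1 n e1 e2 S) : S.sum = 0 := by
  obtain ⟨x, hs, hS⟩ := h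
  subst hS
  rw [Multiset.sum_add, Multiset.sum_replicate]
  have hmap : ((Finset.univ : Finset (Fin n)).val.map (fun i => x i • e1 + e2)).sum
      = ∑ i, (x i • e1 + e2) := rfl
  rw [hmap, Finset.sum_add_distrib, ← Finset.sum_smul, hs, Finset.sum_const,
    Finset.card_univ, Fintype.card_fin, nsmul_self_zero', one_smul, add_zero,
    ← succ_nsmul e1 (n - 1), Nat.sub_add_cancel hn, nsmul_self_zero']

theorem isBasis_swap' {N : ℕ} {e1 e2 : ZMod N × ZMod N} (hb : IsBasis e1 e2) :
    IsBasis e2 e1 := by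
  have h : (fun p : ZMod N × ZMod N => p.1 • e2 + p.2 • e1)
      = (fun p : ZMod N × ZMod N => p.1 • e1 + p.2 • e2) ∘ Prod.swap := by
    funext p; simp [Prod.swap, add_comm]
  rw [IsBasis, h]
  exact hb.comp Prod.swap_bijective

theorem two_ne_basis' {n : ℕ} (hn : 3 ≤ n) {e1 e2 : ZMod n × ZMod n} (hb : IsBasis e1 e2)
    (h : e2 + e2 = 0) : False := by
  haveI : NeZero n := ⟨by omega⟩
  have h2 : (2 : ZMod n) • e2 = e2 + e2 := two_smul _ _
  have h3 : (0 : ZMod n) • e1 + (2 : ZMod n) • e2 = (0 : ZMod n) • e1 + (0 : ZMod n) • e2 := by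
    simp [h2, h]
  have h4 := (basis_coeff' hb h3).2
  have h5 : ((2 : ℕ) : ZMod n) = 0 := by push_cast; exact h4
  have h6 : n ∣ 2 := (ZMod.natCast_eq_zero_iff 2 n).1 h5
  have := Nat.le_of_dvd (by norm_num) h6
  omega

/-- distinctness of e1, e2, e1+e2 -/
theorem basis_distinct' {n : ℕ} (hn : 2 ≤ n) {e1 e2 : ZMod n × ZMod n} (hb : IsBasis e1 e2) :
    e1 ≠ e2 ∧ e1 ≠ e1 + e2 ∧ e2 ≠ e1 + e2 := by
  haveI : Fact (1 < n) := ⟨by omega⟩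
  refine ⟨fun h => ?_, fun h => ?_, fun h => ?_⟩
  · have h3 : (1 : ZMod n) • e1 + (0 : ZMod n) • e2 = (0 : ZMod n) • e1 + (1 : ZMod n) • e2 := by
      simp [h]
    exact one_ne_zero (basis_coeff' hb h3).1
  · have h3 : (1 : ZMod n) • e1 + (0 : ZMod n) • e2 = (1 : ZMod n) • e1 + (1 : ZMod n) • e2 := by
      simp [← h]
    exact one_ne_zero ((basis_coeff' hb h3).2).symm
  · have h3 : (0 : ZMod n) • e1 + (1 : ZMod n) • e2 = (1 : ZMod n) • e1 + (1 : ZMod n) • e2 := by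
      simp [← h]
    exact one_ne_zero ((basis_coeff' hb h3).1).symm

/-- The main work for the middle case when `x` is the first basis element. -/
theorem middle_aux' {n k : ℕ} (hn : 4 ≤ n) (hk : 2 ≤ k) (hkn : k ≤ n - 2)
    {e1 e2 f1 f2 x y : ZMod n × ZMod n} (hb : IsBasis e1 e2) (hb' : IsBasis f1 f2)
    (hxy : x ≠ y)
    {S : Multiset (ZMod n × ZMod n)} (hxS : x ∈ S)
    (hS : S = Multiset.replicate (n - 1) e1 + Multiset.replicate (n - 1) e2 +
          Multiset.replicate k (e1 + e2))
    (hS' : y ::ₘ S.erase x = Multiset.replicate (n - 1) f1 + Multiset.replicate (n - 1) f2 +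
          Multiset.replicate k (f1 + f2))
    (hxe : x = e1) : False := by
  obtain ⟨he12, he1s, he2s⟩ := basis_distinct' (by omega) hb
  obtain ⟨hf12, hf1s, hf2s⟩ := basis_distinct' (by omega) hb'
  have cS : ∀ z, Multiset.count z S
      = if z = e1 then n - 1 else if z = e2 then n - 1 else if z = e1 + e2 then k else 0 := by
    intro z; rw [hS]; exact count_three' he12 he1s he2s _ _ _ z
  have cS' : ∀ z, Multiset.count z (y ::ₘ S.erase x)
      = if z = f1 then n - 1 else if z = f2 then n - 1 else if z = f1 + f2 then k else 0 := by
    intro z; rw [hS']; exact count_three' hf12 hf1s hf2s _ _ _ z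
  -- count of x
  have cxS : Multiset.count x S = n - 1 := by rw [cS, if_pos hxe]
  have cxS' : Multiset.count x (y ::ₘ S.erase x) = n - 1 - 1 := by
    rw [Multiset.count_cons_of_ne hxy, Multiset.count_erase_self, cxS]
  have eqx := (cxS'.symm).trans (cS' x)
  have hxf : x = f1 + f2 ∧ k = n - 2 := by
    split_ifs at eqx with h1 h2 h3
    · omega
    · omega
    · exact ⟨h3, by omega⟩
    · omega
  -- count of y
  have cyS' : Multiset.count y (y ::ₘ S.erase x) = Multiset.count y S + 1 := by
    rw [Multiset.count_cons_self, Multiset.count_erase_of_ne (Ne.symm hxy)]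
  have eqy : (Multiset.count y S) + 1
      = if y = f1 then n - 1 else if y = f2 then n - 1 else if y = f1 + f2 then k else 0 := by
    rw [← cyS', cS']
  have hye : y = e1 + e2 := by
    by_contra hne
    rw [cS y] at eqy
    rw [if_neg (show ¬ y = e1 + e2 from hne)] at eqy
    split_ifs at eqy <;> omega
  have cy : Multiset.count y S = k := by
    rw [cS y, hye, if_neg (Ne.symm he1s), if_neg (Ne.symm he2s), if_pos rfl]
  rw [cy] at eqy
  have hyf : y = f1 ∨ y = f2 := by
    split_ifs at eqy <;> first | (left; assumption) | (right; assumption) | omega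
  -- count of e2
  have ce2 : Multiset.count e2 (y ::ₘ S.erase x) = n - 1 := by
    rw [Multiset.count_cons_of_ne (by rw [hye]; exact he2s),
      Multiset.count_erase_of_ne (by rw [hxe]; exact he12.symm), cS,
      if_neg he12.symm, if_pos rfl]
  have he2f : e2 = f1 ∨ e2 = f2 := by
    have h := (ce2.symm).trans (cS' e2)
    split_ifs at h <;> first | (left; assumption) | (right; assumption) | omega
  have hyne2 : y ≠ e2 := by rw [hye]; exact he2s.symm
  have hsum : f1 + f2 = y + e2 := by
    rcases hyf with h1 | h1 <;> rcases he2f with h2 | h2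
    · exact absurd (h1.trans h2.symm) hyne2
    · rw [← h1, ← h2]
    · rw [← h1, ← h2]; exact add_comm _ _
    · exact absurd (h1.trans h2.symm) hyne2
  have hkey : x = y + e2 := hxf.1.trans hsum
  rw [hxe, hye, add_assoc] at hkey
  exact two_ne_basis' (by omega) hb (left_eq_add.mp hkey)

theorem knm1_distinct' {n : ℕ} (hn : 2 ≤ n) {e1 e2 : ZMod n × ZMod n} (hb : IsBasis e1 e2)
    {x0 : ℕ} (h1 : 1 ≤ x0) (h2 : x0 ≤ n - 1) :
    e1 ≠ (x0 : ZMod n) • e1 + e2 ∧ e2 ≠ (x0 : ZMod n) • e1 + e2 := by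
  haveI : Fact (1 < n) := ⟨by omega⟩
  haveI : NeZero n := ⟨by omega⟩
  constructor
  · intro h
    have h3 : (1 : ZMod n) • e1 + (0 : ZMod n) • e2
        = (x0 : ZMod n) • e1 + (1 : ZMod n) • e2 := by
      rw [one_smul, zero_smul, add_zero, one_smul]; exact h
    exact one_ne_zero ((basis_coeff' hb h3).2).symm
  · intro h
    have h3 : (0 : ZMod n) • e1 + (1 : ZMod n) • e2
        = (x0 : ZMod n) • e1 + (1 : ZMod n) • e2 := by
      rw [zero_smul, zero_add, one_smul]; exact h
    have h4 := (basis_coeff' hb h3).1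
    have h5 : n ∣ x0 := (ZMod.natCast_eq_zero_iff x0 n).1 h4.symm
    have := Nat.le_of_dvd (by omega) h5
    omega

theorem stmt16 (n : ℕ) (hn : 2 ≤ n) (k : ℕ) (hk1 : 1 ≤ k) (hk2 : k ≤ n - 1)
    (S : Multiset (ZMod n × ZMod n)) (hcard : Multiset.card S = 2 * n - 2 + k)
    (hzs : ∀ T ≤ S, T ≠ 0 → Multiset.card T ≤ 2 * n - 1 - k → T.sum ≠ 0)
    (hstr : HasConjStructure n k S)
    (x : ZMod n × ZMod n) (hx : x ∈ S) (y : ZMod n × ZMod n)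
    (hzs' : ∀ T ≤ y ::ₘ S.erase x, T ≠ 0 →
      Multiset.card T ≤ 2 * n - 1 - k → T.sum ≠ 0)
    (hstr' : HasConjStructure n k (y ::ₘ S.erase x)) :
    x = y := by
  by_contra hxy
  obtain ⟨e1, e2, hb, hc0, hc1, hc2, hc3⟩ := hstr
  obtain ⟨f1, f2, hb', hd0, hd1, hd2, hd3⟩ := hstr'
  rcases Nat.lt_or_ge k 2 with hklt | hkge
  · -- k = 1 : both sums are zero
    have hk : k = 1 := by clear hc0 hc1 hc2 hc3 hd0 hd1 hd2 hd3; omega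
    have hs1 : S.sum = 0 := form1_sum' (by omega) (hc1 hk)
    have hs2 : (y ::ₘ S.erase x).sum = 0 := form1_sum' (by omega) (hd1 hk)
    rw [Multiset.sum_cons] at hs2
    have hs3 : x + (S.erase x).sum = 0 := by
      rw [← Multiset.sum_cons, Multiset.cons_erase hx, hs1]
    exact hxy (add_right_cancel (hs3.trans hs2.symm))
  · rcases Nat.lt_or_ge k (n - 1) with hkn | hkn
    · -- middle case : 2 ≤ k ≤ n - 2, so n ≥ 4
      have hS := hc2 ⟨hkge, by clear hc0 hc1 hc2 hc3 hd0 hd1 hd2 hd3; omega⟩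
      have hS' := hd2 ⟨hkge, by clear hc0 hc1 hc2 hc3 hd0 hd1 hd2 hd3; omega⟩
      clear hc0 hc1 hc2 hc3 hd0 hd1 hd2 hd3
      have hn4 : 4 ≤ n := by omega
      have hx3 : x = e1 ∨ x = e2 ∨ x = e1 + e2 := by
        rw [hS] at hx
        simp only [Multiset.mem_add, Multiset.mem_replicate] at hx
        tauto
      rcases hx3 with hxe | hxe | hxe
      · exact middle_aux' hn4 hkge (by omega) hb hb' hxy hx hS hS' hxe
      · refine middle_aux' hn4 hkge (by omega) (isBasis_swap' hb) hb' hxy hx ?_ ?_ hxe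
        · rw [hS, add_comm (Multiset.replicate (n - 1) e1) (Multiset.replicate (n - 1) e2),
            add_comm e1 e2]
        · rw [hS', add_comm f1 f2]
      · -- x = e1 + e2 : count drops from k to k - 1, impossible
        obtain ⟨he12, he1s, he2s⟩ := basis_distinct' (by omega) hb
        obtain ⟨hf12, hf1s, hf2s⟩ := basis_distinct' (by omega) hb'
        have cx : Multiset.count x S = k := by
          rw [hS, count_three' he12 he1s he2s, hxe, if_neg (Ne.symm he1s),
            if_neg (Ne.symm he2s), if_pos rfl]
        have cx' : Multiset.count x (y ::ₘ S.erase x) = k - 1 := by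
          rw [Multiset.count_cons_of_ne hxy, Multiset.count_erase_self, cx]
        have h2 : Multiset.count x (y ::ₘ S.erase x)
            = if x = f1 then n - 1 else if x = f2 then n - 1 else
              if x = f1 + f2 then k else 0 := by
          rw [hS']; exact count_three' hf12 hf1s hf2s _ _ _ x
        rw [cx'] at h2
        split_ifs at h2 <;> omega
    · -- k = n - 1 : all three multiplicities are n - 1
      have hk : k = n - 1 := by clear hc0 hc1 hc2 hc3 hd0 hd1 hd2 hd3; omega
      obtain ⟨x0, hx01, hx02, hg, hS⟩ := hc3 hk
      obtain ⟨x1, hx11, hx12, hg', hS'⟩ := hd3 hk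
      clear hc0 hc1 hc2 hc3 hd0 hd1 hd2 hd3
      have hn3 : 3 ≤ n := by omega
      have he12 := (basis_distinct' (by omega) hb).1
      have hf12 := (basis_distinct' (by omega) hb').1
      obtain ⟨he1a, he2a⟩ := knm1_distinct' (by omega) hb hx01 hx02
      obtain ⟨hf1a, hf2a⟩ := knm1_distinct' (by omega) hb' hx11 hx12
      have hcp : 0 < Multiset.count x S := Multiset.count_pos.mpr hx
      have cx : Multiset.count x S = n - 1 := by
        have h : Multiset.count x S
            = if x = e1 then n - 1 else if x = e2 then n - 1 else
              if x = (x0 : ZMod n) • e1 + e2 then n - 1 else 0 := by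
          rw [hS]; exact count_three' he12 he1a he2a _ _ _ x
        split_ifs at h <;> omega
      have cx' : Multiset.count x (y ::ₘ S.erase x) = n - 1 - 1 := by
        rw [Multiset.count_cons_of_ne hxy, Multiset.count_erase_self, cx]
      have h2 : Multiset.count x (y ::ₘ S.erase x)
          = if x = f1 then n - 1 else if x = f2 then n - 1 else
            if x = (x1 : ZMod n) • f1 + f2 then n - 1 else 0 := by
        rw [hS']; exact count_three' hf12 hf1a hf2a _ _ _ x
      rw [cx'] at h2
      split_ifs at h2 <;> omega
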